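/- Let n ≥ 2 and let b_1,…,b_n ≥ 2 and c_1,…,c_n ≥ 1 be integers. If B_n ∩ C_n ∩ C_{n−1} ≠ ∅, then c_n > (1 + [0;c_{n−1},…,c_1]) · (b_n − 1 + [0;b_{n−1},…,b_1]), where [0;c_{n−1},…,c_1] and [0;b_{n−1},…,b_1] are the continued fractions of the reversed sequences. -/

import Mathlib

noncomputable section

namespace ShulgaPaper

open Filter Topology

/-- The value of the finite continued fraction `[0; a₁, …, aₙ]`
(the empty continued fraction has value `0`). -/
def cf : List ℕ → ℝ
  | [] => 0
  | a :: l => 1 / ((a : ℝ) + cf l)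

/-- Iterates of the Gauss map, starting from the fractional part of `x`. -/
def gaussIter (x : ℝ) : ℕ → ℝ
  | 0 => Int.fract x
  | n + 1 => Int.fract (1 / gaussIter x n)

/-- The `n`-th partial quotient `aₙ(x)` of the continued fraction expansion of `x`
(for `n ≥ 1`; a junk value is returned if it is undefined). -/
def pq (x : ℝ) (n : ℕ) : ℕ := ⌊1 / gaussIter x (n - 1)⌋₊

/-- The `n`-th partial quotient `aₙ(x)` of `x` is defined (`n ≥ 1`), i.e. `n` does not
exceed the length of the continued fraction expansion of `x`. -/
def pqDefined (x : ℝ) (n : ℕ) : Prop := gaussIter x (n - 1) ≠ 0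

/-- The set `G` of real numbers that are rational or whose partial quotients diverge. -/
def G : Set ℝ :=
  {x | (∃ q : ℚ, x = (q : ℝ)) ∨ Tendsto (fun n => pq x n) atTop atTop}

/-- The list of pairs `(b_k, c_k)`, `k = 1, …, n`, produced by (a totalized version of)
Shulga's algorithm applied to `α`. -/
def shulgaList (α : ℝ) : ℕ → List (ℕ × ℕ)
  | 0 => []
  | n + 1 =>
      let L := shulgaList α n
      let b := pq (α - cf (L.map Prod.snd)) (n + 1) + 1
      let c := pq (α - cf (L.map Prod.fst ++ [b])) (n + 1)
      L ++ [(b, c)]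

/-- The list `[b₁, …, bₙ]` of Shulga's algorithm applied to `α`. -/
def bList (α : ℝ) (n : ℕ) : List ℕ := (shulgaList α n).map Prod.fst

/-- The list `[c₁, …, cₙ]` of Shulga's algorithm applied to `α`. -/
def cList (α : ℝ) (n : ℕ) : List ℕ := (shulgaList α n).map Prod.snd

/-- `bₙ` of Shulga's algorithm applied to `α` (for `n ≥ 1`). -/
def shulgaB (α : ℝ) (n : ℕ) : ℕ := ((shulgaList α n).getLast?.getD (0, 0)).1

/-- `cₙ` of Shulga's algorithm applied to `α` (for `n ≥ 1`). -/
def shulgaC (α : ℝ) (n : ℕ) : ℕ := ((shulgaList α n).getLast?.getD (0, 0)).2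

/-- The first `n` steps of Shulga's algorithm applied to `α` are defined: for each step
`k + 1 ≤ n`, the partial quotients `a_{k+1}(α - [0;c₁,…,c_k])` and
`a_{k+1}(α - [0;b₁,…,b_{k+1}])` defining `b_{k+1}` and `c_{k+1}` exist
(in particular the algorithm has not stopped before step `n`). -/
def shulgaDefined (α : ℝ) (n : ℕ) : Prop :=
  ∀ k < n, pqDefined (α - cf (cList α k)) (k + 1) ∧
    pqDefined (α - cf (bList α (k + 1))) (k + 1)

/-- The half-open interval whose included endpoint is `x` and excluded endpoint is `y`,
the smaller one being the left endpoint. -/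
def hIco (x y : ℝ) : Set ℝ := if x ≤ y then Set.Ico x y else Set.Ioc y x

/-- The list `[a 1, …, a n]`. -/
def listOf (a : ℕ → ℕ) (n : ℕ) : List ℕ := (List.range n).map fun i => a (i + 1)

/-- The interval `B_k` determined by the digits `b`, `c` (`k ≥ 1`). -/
def Bset (b c : ℕ → ℕ) (k : ℕ) : Set ℝ :=
  hIco (cf (listOf b (k - 1) ++ [b k - 1]) + cf (listOf c (k - 1)))
    (cf (listOf b k) + cf (listOf c (k - 1)))

/-- The interval `C_k` determined by the digits `b`, `c` (`k ≥ 1`). -/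
def Cset (b c : ℕ → ℕ) (k : ℕ) : Set ℝ :=
  hIco (cf (listOf c k) + cf (listOf b k))
    (cf (listOf c (k - 1) ++ [c k + 1]) + cf (listOf b k))

/-- `A₀ = [0,1]` and `Aₙ = ⋂_{k=1}^{n} (B_k ∩ C_k)` for `n ≥ 1`. -/
def Aset (b c : ℕ → ℕ) : ℕ → Set ℝ
  | 0 => Set.Icc 0 1
  | n + 1 => ⋂ k ∈ Finset.Icc 1 (n + 1), (Bset b c k ∩ Cset b c k)

/-- The denominators of the convergents of `[0; a 1, a 2, …]`:
`q₀ = 1`, `q₁ = a 1`, `q_k = a k * q_{k-1} + q_{k-2}`. -/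
def qden (a : ℕ → ℕ) : ℕ → ℕ
  | 0 => 1
  | 1 => a 1
  | n + 2 => a (n + 2) * qden a (n + 1) + qden a n

/-!
Write `β = [0; b₁, …, b_{n-1}]`, `ρ = [0; b_{n-1}, …, b₁]` and `Q` for the denominator of `β`,
and similarly `γ`, `σ`, `F` for the `c`'s. The matrix of convergents has determinant
`ε = (-1)^(n-1)` and reversing the digits transposes it, which gives
`[0; b₁, …, b_{n-1}, t] = β + ε / (Q² (ρ + t))`. So every endpoint of `Bₙ`, `Cₙ`, `C_{n-1}` is
`β + γ` plus `ε` times an explicit nonnegative number, and in the coordinate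
`y = ε (x - β - γ)` a common point `x` satisfies
`(F² (σ + cₙ + 1))⁻¹ + (Q² (ρ + bₙ))⁻¹ < y < (F² (σ + 1))⁻¹` and `y ≤ (Q² (ρ + bₙ - 1))⁻¹`.
Clearing denominators,
`cₙ Q² (ρ + bₙ) > F² (σ + 1) (σ + cₙ + 1) > (σ + 1) Q² (ρ + bₙ - 1) (ρ + bₙ)`.
-/

open Matrix

theorem cf_nonneg : ∀ l : List ℕ, 0 ≤ cf l
  | [] => le_rfl
  | a :: l => by have := cf_nonneg l; rw [cf]; positivity

theorem cf_append_succ (a : ℕ) : ∀ l : List ℕ, cf (l ++ [a + 1]) = cf (l ++ [a, 1])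
  | [] => by norm_num [cf]
  | x :: l => by simp only [List.cons_append, cf, cf_append_succ a l]

/-- For `l = [a₁, …, a_k]`, the product of the matrices `!![0, 1; 1, aᵢ]`, whose columns are
`(p_{k-1}, q_{k-1})` and `(p_k, q_k)` for the convergents `pᵢ / qᵢ` of `[0; a₁, …, a_k]`. -/
def convergentMatrix (l : List ℕ) : Matrix (Fin 2) (Fin 2) ℝ :=
  (l.map fun a : ℕ => !![0, 1; 1, (a : ℝ)]).prod

theorem convergentMatrix_cons (a : ℕ) (l : List ℕ) :
    convergentMatrix (a :: l) = !![0, 1; 1, (a : ℝ)] * convergentMatrix l := rfl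

theorem convergentMatrix_append_singleton (l : List ℕ) (a : ℕ) :
    convergentMatrix (l ++ [a]) = convergentMatrix l * !![0, 1; 1, (a : ℝ)] := by
  simp [convergentMatrix]

theorem convergentMatrix_reverse (l : List ℕ) :
    convergentMatrix l.reverse = (convergentMatrix l)ᵀ := by
  induction l with
  | nil => simp [convergentMatrix]
  | cons a l ih =>
    rw [List.reverse_cons, convergentMatrix_append_singleton, ih, convergentMatrix_cons,
      transpose_mul]
    congr 1
    ext i j; fin_cases i <;> fin_cases j <;> rfl

theorem det_convergentMatrix (l : List ℕ) : (convergentMatrix l).det = (-1) ^ l.length := by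
  induction l with
  | nil => simp [convergentMatrix]
  | cons a l ih => rw [convergentMatrix_cons, det_mul, ih, det_fin_two_of, List.length_cons]; ring

theorem convergentMatrix_nonneg (l : List ℕ) (i j : Fin 2) : 0 ≤ convergentMatrix l i j := by
  induction l generalizing i with
  | nil => fin_cases i <;> fin_cases j <;> simp [convergentMatrix]
  | cons a l ih =>
    rw [convergentMatrix_cons, mul_apply, Fin.sum_univ_two]
    fin_cases i <;> simp [add_nonneg, mul_nonneg, ih]

theorem convergentMatrix_one_one_pos {l : List ℕ} (hl : ∀ a ∈ l, 0 < a) :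
    0 < convergentMatrix l 1 1 := by
  induction l with
  | nil => simp [convergentMatrix]
  | cons a l ih =>
    have ha : (0 : ℝ) < a := by exact_mod_cast hl a List.mem_cons_self
    have := ih fun x hx => hl x (List.mem_cons_of_mem a hx)
    rw [convergentMatrix_cons, mul_apply, Fin.sum_univ_two]
    simpa using add_pos_of_nonneg_of_pos (convergentMatrix_nonneg l 0 1) (mul_pos ha this)

theorem cf_eq_div {l : List ℕ} (hl : ∀ a ∈ l, 0 < a) :
    cf l = convergentMatrix l 0 1 / convergentMatrix l 1 1 := by
  induction l with
  | nil => simp [cf, convergentMatrix]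
  | cons a l ih =>
    have hl' : ∀ x ∈ l, 0 < x := fun x hx => hl x (List.mem_cons_of_mem a hx)
    have h01 := convergentMatrix_nonneg l 0 1
    have h11 := convergentMatrix_one_one_pos hl'
    rw [cf, ih hl', convergentMatrix_cons, eta_fin_two (convergentMatrix l), mul_fin_two]
    simp only [of_apply, cons_val', cons_val_zero, cons_val_one, empty_val', cons_val_fin_one]
    field_simp
    ring

theorem cf_reverse_eq_div {l : List ℕ} (hl : ∀ a ∈ l, 0 < a) :
    cf l.reverse = convergentMatrix l 1 0 / convergentMatrix l 1 1 := by
  rw [cf_eq_div fun a ha => hl a (List.mem_reverse.mp ha), convergentMatrix_reverse]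
  rfl

theorem cf_append_singleton {l : List ℕ} (hl : ∀ a ∈ l, 0 < a) {t : ℕ} (ht : 0 < t) :
    cf (l ++ [t]) =
      cf l + (-1) ^ l.length * ((convergentMatrix l 1 1) ^ 2 * (cf l.reverse + t))⁻¹ := by
  have hlt : ∀ a ∈ l ++ [t], 0 < a := by simpa [or_imp, forall_and] using ⟨hl, ht⟩
  have ht' : (0 : ℝ) < t := by exact_mod_cast ht
  rw [cf_eq_div hlt, cf_eq_div hl, cf_reverse_eq_div hl, ← det_convergentMatrix, det_fin_two,
    convergentMatrix_append_singleton, mul_apply, mul_apply]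
  have hq := convergentMatrix_one_one_pos hl
  have hq' := convergentMatrix_nonneg l 1 0
  simp only [Fin.sum_univ_two, of_apply, cons_val', cons_val_zero, cons_val_one, empty_val',
    cons_val_fin_one]
  field_simp
  ring

theorem mem_hIco_of_le {x y t : ℝ} (h : x ≤ y) : t ∈ hIco x y ↔ x ≤ t ∧ t < y := by
  rw [hIco, if_pos h, Set.mem_Ico]

theorem mem_hIco_of_lt {x y t : ℝ} (h : y < x) : t ∈ hIco x y ↔ y < t ∧ t ≤ x := by
  rw [hIco, if_neg h.not_ge, Set.mem_Ioc]

theorem mem_hIco {x y t : ℝ} : t ∈ hIco x y ↔ (x ≤ t ∧ t < y) ∨ (y < t ∧ t ≤ x) := by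
  rcases le_or_gt x y with h | h
  · rw [mem_hIco_of_le h, or_iff_left fun h' => by linarith [h'.1, h'.2]]
  · rw [mem_hIco_of_lt h, or_iff_right fun h' => by linarith [h'.1, h'.2]]

theorem mem_hIco_add_mul_iff {ε a u v x : ℝ} (hε : ε = 1 ∨ ε = -1) :
    x ∈ hIco (a + ε * u) (a + ε * v) ↔ ε * (x - a) ∈ hIco u v := by
  simp only [mem_hIco]
  rcases hε with rfl | rfl <;> constructor <;> rintro (⟨h₁, h₂⟩ | ⟨h₁, h₂⟩) <;>
    first | (left; constructor <;> linarith) | (right; constructor <;> linarith)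

theorem mul_lt_of_inv_add_inv_lt {p q r s c : ℝ} (hp : 0 < p) (hq : 0 < q) (hr : 0 < r)
    (hs : 0 < s) (hc : 0 < c)
    (h₁ : (p * (s + c))⁻¹ + (q * (r + 1))⁻¹ < (p * s)⁻¹)
    (h₂ : (p * (s + c))⁻¹ + (q * (r + 1))⁻¹ < (q * r)⁻¹) :
    s * r < c := by
  have k₁ : p * s * (s + c) < c * (q * (r + 1)) := by
    have : (q * (r + 1))⁻¹ < c / (p * s * (s + c)) := by
      rw [show c / (p * s * (s + c)) = (p * s)⁻¹ - (p * (s + c))⁻¹ by field_simp; ring]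
      linarith
    rwa [inv_eq_one_div, div_lt_div_iff₀ (by positivity) (by positivity), one_mul] at this
  have k₂ : q * r * (r + 1) < p * (s + c) := by
    have : (p * (s + c))⁻¹ < 1 / (q * r * (r + 1)) := by
      rw [show 1 / (q * r * (r + 1)) = (q * r)⁻¹ - (q * (r + 1))⁻¹ by field_simp; ring]
      linarith
    rwa [inv_eq_one_div, div_lt_div_iff₀ (by positivity) (by positivity), one_mul, one_mul]
      at this
  -- `c q (r + 1) > s p (s + c) > s q r (r + 1)`
  nlinarith [mul_lt_mul_of_pos_left k₂ hs, mul_pos hq (add_pos hr one_pos)]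

theorem mul_lt_of_mem_hIco_offsets {ε a x p q r s c : ℝ} (hε : ε = 1 ∨ ε = -1) (hp : 0 < p)
    (hq : 0 < q) (hr : 0 < r) (hs : 0 < s) (hc : 1 ≤ c)
    (hB : x ∈ hIco (a + ε * (q * r)⁻¹) (a + ε * (q * (r + 1))⁻¹))
    (hC : x ∈ hIco (a + ε * ((p * (s + c - 1))⁻¹ + (q * (r + 1))⁻¹))
      (a + ε * ((p * (s + c))⁻¹ + (q * (r + 1))⁻¹)))
    (hC' : x ∈ hIco (a + ε * 0) (a + ε * (p * s)⁻¹)) :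
    s * r < c := by
  rw [mem_hIco_add_mul_iff hε] at hB hC hC'
  have hB_upper : ε * (x - a) ≤ (q * r)⁻¹ :=
    ((mem_hIco_of_lt (by gcongr; linarith)).mp hB).2
  have hC_lower : (p * (s + c))⁻¹ + (q * (r + 1))⁻¹ < ε * (x - a) :=
    ((mem_hIco_of_lt (add_lt_add_left (inv_strictAnti₀ (mul_pos hp (by linarith))
      (by gcongr; linarith)) _)).mp hC).1
  have hC'_upper : ε * (x - a) < (p * s)⁻¹ :=
    ((mem_hIco_of_le (by positivity)).mp hC').2
  exact mul_lt_of_inv_add_inv_lt hp hq hr hs (by linarith) (by linarith) (by linarith)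

theorem mul_lt_of_mem_hIco {bl cl : List ℕ} (hlen : bl.length = cl.length)
    (hbl : ∀ a ∈ bl, 0 < a) (hcl : ∀ a ∈ cl, 0 < a) {b c : ℕ} (hb : 2 ≤ b) (hc : 1 ≤ c) {x : ℝ}
    (hB : x ∈ hIco (cf (bl ++ [b - 1]) + cf cl) (cf (bl ++ [b]) + cf cl))
    (hC : x ∈ hIco (cf (cl ++ [c]) + cf (bl ++ [b])) (cf (cl ++ [c + 1]) + cf (bl ++ [b])))
    (hC' : x ∈ hIco (cf cl + cf bl) (cf (cl ++ [1]) + cf bl)) :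
    (1 + cf cl.reverse) * (b - 1 + cf bl.reverse) < c := by
  have eB := fun (t : ℕ) (ht : 0 < t) => cf_append_singleton hbl ht
  have eC := fun (t : ℕ) (ht : 0 < t) => cf_append_singleton hcl ht
  rw [← hlen] at eC
  have hρ := cf_nonneg bl.reverse
  have hb' : (2 : ℝ) ≤ b := by exact_mod_cast hb
  have hc' : (1 : ℝ) ≤ c := by exact_mod_cast hc
  calc (1 + cf cl.reverse) * (b - 1 + cf bl.reverse)
      = (cf cl.reverse + 1) * (cf bl.reverse + b - 1) := by ring
    _ < c := by
      refine mul_lt_of_mem_hIco_offsets (neg_one_pow_eq_or ℝ bl.length)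
        (a := cf bl + cf cl) (x := x)
        (pow_pos (convergentMatrix_one_one_pos hcl) 2)
        (pow_pos (convergentMatrix_one_one_pos hbl) 2) (by linarith)
        (by linarith [cf_nonneg cl.reverse]) hc' ?_ ?_ ?_
      · convert hB using 2
        · rw [eB _ (by omega), Nat.cast_sub (by omega)]; push_cast; ring
        · rw [eB _ (by omega)]; ring
      · convert hC using 2
        · rw [eB _ (by omega), eC _ hc]; ring
        · rw [eB _ (by omega), eC _ (by omega)]; push_cast; ring
      · convert hC' using 2
        · ring
        · rw [eC _ one_pos]; push_cast; ring

theorem listOf_succ (a : ℕ → ℕ) (k : ℕ) : listOf a (k + 1) = listOf a k ++ [a (k + 1)] := by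
  simp [listOf, List.range_succ]

theorem length_listOf (a : ℕ → ℕ) (k : ℕ) : (listOf a k).length = k := by simp [listOf]

theorem mem_listOf {a : ℕ → ℕ} {k x : ℕ} : x ∈ listOf a k ↔ ∃ i, 1 ≤ i ∧ i ≤ k ∧ a i = x := by
  simp only [listOf, List.mem_map, List.mem_range]
  constructor
  · rintro ⟨i, hi, rfl⟩; exact ⟨i + 1, by omega, by omega, rfl⟩
  · rintro ⟨i, hi₁, hi₂, rfl⟩; exact ⟨i - 1, by omega, by rw [Nat.sub_add_cancel hi₁]⟩

/-- if `Bₙ ∩ Cₙ ∩ C_{n−1} ≠ ∅` then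
`cₙ > (1 + [0;c_{n−1},…,c₁])(bₙ − 1 + [0;b_{n−1},…,b₁])`. -/
theorem stmt14 (n : ℕ) (hn : 2 ≤ n) (b c : ℕ → ℕ)
    (hb : ∀ k : ℕ, 1 ≤ k → k ≤ n → 2 ≤ b k) (hc : ∀ k : ℕ, 1 ≤ k → k ≤ n → 1 ≤ c k)
    (h : (Bset b c n ∩ Cset b c n ∩ Cset b c (n - 1)).Nonempty) :
    (c n : ℝ) > (1 + cf (listOf c (n - 1)).reverse) *
      ((b n : ℝ) - 1 + cf (listOf b (n - 1)).reverse) := by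
  obtain ⟨m, rfl⟩ : ∃ m, n = m + 2 := ⟨n - 2, by omega⟩
  obtain ⟨x, ⟨hxB, hxC⟩, hxC'⟩ := h
  have hbl : ∀ a ∈ listOf b (m + 1), 0 < a := by
    intro a ha
    obtain ⟨i, hi₁, hi₂, rfl⟩ := mem_listOf.mp ha
    linarith [hb i hi₁ (by omega)]
  have hcl : ∀ a ∈ listOf c (m + 1), 0 < a := by
    intro a ha
    obtain ⟨i, hi₁, hi₂, rfl⟩ := mem_listOf.mp ha
    exact hc i hi₁ (by omega)
  simp only [Bset, Cset, show m + 2 - 1 = m + 1 from rfl, Nat.add_sub_cancel,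
    listOf_succ b (m + 1), listOf_succ c (m + 1)] at hxB hxC hxC' ⊢
  rw [cf_append_succ, List.append_cons _ (c (m + 1)), ← listOf_succ] at hxC'
  exact mul_lt_of_mem_hIco (by simp only [length_listOf]) hbl hcl (hb _ (by omega) le_rfl)
    (hc _ (by omega) le_rfl) hxB hxC hxC'

end ShulgaPaper
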